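/- As ℓ → 0⁺, the quantity √ℓ · (cosh(r₀(ℓ)) − 1) converges to √(√3/(4π)) (equivalently, to 1/b where b = √(4π/√3)). -/

import Mathlib

/-- Inverse hyperbolic cosine: `arcosh y = log (y + √(y² - 1))` for `y ≥ 1`. -/
noncomputable def arcosh (y : ℝ) : ℝ := Real.log (y + Real.sqrt (y ^ 2 - 1))

/-- The function `W` from the paper. -/
noncomputable def W (x : ℝ) : ℝ :=
  (Real.sqrt 3 / (4 * Real.pi)) *
    (arcosh (1 + 1 / (1 + Real.sqrt (1 + (8 * x ^ 2 - 8 * x + 1) ^ 2)))) ^ 2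

/-- The function `κ(ℓ) = cosh(√(4πℓ/√3)) - 1`. -/
noncomputable def κ (ℓ : ℝ) : ℝ :=
  Real.cosh (Real.sqrt (4 * Real.pi * ℓ / Real.sqrt 3)) - 1

/-- The tube radius `r₀(ℓ)`, the positive real with
`cosh²(r₀(ℓ)) = (1/2)(√(1 - 2κ(ℓ))/κ(ℓ) + 1)`. -/
noncomputable def r₀ (ℓ : ℝ) : ℝ :=
  arcosh (Real.sqrt ((1 / 2) * (Real.sqrt (1 - 2 * κ ℓ) / κ ℓ + 1)))

/-! With t = √(4πℓ/√3) we have ℓ = (√3/(4π)) t² and κ(ℓ) = cosh t - 1 = 2 sinh²(t/2) ~ t²/2,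
so ℓ/κ(ℓ) → √3/(2π). The defining equation of r₀ gives
ℓ cosh² r₀ = (ℓ/κ · √(1 - 2κ) + ℓ)/2 → √3/(4π), hence √ℓ cosh r₀ → √(√3/(4π)) while √ℓ → 0. -/

open Real Filter Set Topology

lemma tendsto_sinh_div_self : Tendsto (fun x : ℝ => sinh x / x) (𝓝[≠] 0) (𝓝 1) := by
  have h := hasDerivAt_sinh 0
  rw [hasDerivAt_iff_tendsto_slope] at h
  simpa [slope_fun_def, div_eq_inv_mul] using h

lemma cosh_sub_one_eq_two_mul_sinh_half_sq (x : ℝ) : cosh x - 1 = 2 * sinh (x / 2) ^ 2 := by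
  have h := cosh_two_mul (x / 2)
  rw [mul_div_cancel₀ x two_ne_zero, cosh_sq] at h
  linarith

lemma tendsto_cosh_sub_one_div_sq :
    Tendsto (fun x : ℝ => (cosh x - 1) / x ^ 2) (𝓝[≠] 0) (𝓝 (1 / 2)) := by
  have half : Tendsto (fun x : ℝ => x / 2) (𝓝[≠] 0) (𝓝[≠] 0) :=
    tendsto_nhdsWithin_iff.mpr
      ⟨(continuous_id.div_const 2).continuousWithinAt.tendsto.trans_eq (by simp),
        eventually_nhdsWithin_of_forall fun x hx => div_ne_zero hx two_ne_zero⟩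
  have h := ((tendsto_sinh_div_self.comp half).pow 2).div_const 2
  rw [one_pow] at h
  refine h.congr fun x => ?_
  rw [cosh_sub_one_eq_two_mul_sinh_half_sq]
  simp only [Function.comp_apply]
  ring

lemma tendsto_sqrt_const_mul_nhdsGT_zero {c : ℝ} (hc : 0 < c) :
    Tendsto (fun ℓ : ℝ => √(c * ℓ)) (𝓝[>] 0) (𝓝[>] 0) :=
  tendsto_nhdsWithin_iff.mpr
    ⟨(by fun_prop : Continuous fun ℓ : ℝ => √(c * ℓ)).continuousWithinAt.tendsto.trans_eq
        (by simp),
      eventually_nhdsWithin_of_forall fun ℓ hℓ => sqrt_pos.mpr (mul_pos hc hℓ)⟩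

lemma tendsto_div_cosh_sqrt_const_mul_sub_one {c : ℝ} (hc : 0 < c) :
    Tendsto (fun ℓ : ℝ => ℓ / (cosh √(c * ℓ) - 1)) (𝓝[>] 0) (𝓝 (2 / c)) := by
  have h := ((tendsto_cosh_sub_one_div_sq.comp ((tendsto_sqrt_const_mul_nhdsGT_zero hc).mono_right
    (nhdsGT_le_nhdsNE 0))).const_mul c).inv₀ (by positivity)
  rw [show (c * (1 / 2))⁻¹ = 2 / c by field_simp] at h
  refine h.congr' (eventually_nhdsWithin_of_forall fun ℓ (hℓ : 0 < ℓ) => ?_)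
  have hcℓ : 0 < c * ℓ := mul_pos hc hℓ
  have hcosh : cosh √(c * ℓ) - 1 ≠ 0 :=
    sub_ne_zero.mpr (one_lt_cosh.mpr (sqrt_pos.mpr hcℓ).ne').ne'
  simp only [Function.comp_apply, sq_sqrt hcℓ.le]
  field_simp

lemma κ_eq (ℓ : ℝ) : κ ℓ = cosh √(4 * π / √3 * ℓ) - 1 := by
  rw [κ, mul_div_right_comm]

lemma tendsto_div_κ : Tendsto (fun ℓ => ℓ / κ ℓ) (𝓝[>] 0) (𝓝 (2 / (4 * π / √3))) := by
  simpa only [κ_eq] using tendsto_div_cosh_sqrt_const_mul_sub_one (by positivity)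

lemma tendsto_κ : Tendsto κ (𝓝[>] 0) (𝓝 0) := by
  have h : Continuous κ := by unfold κ; fun_prop
  simpa [κ] using h.continuousWithinAt (s := Ioi 0) (x := 0) |>.tendsto

lemma κ_pos {ℓ : ℝ} (hℓ : 0 < ℓ) : 0 < κ ℓ := by
  rw [κ_eq, sub_pos, one_lt_cosh, sqrt_ne_zero']
  positivity

lemma arcosh_eq_real_arcosh : _root_.arcosh = Real.arcosh := rfl

lemma cosh_r₀_sq {ℓ : ℝ} (hℓ : 0 < ℓ) (hκ : κ ℓ ≤ √2 - 1) :
    cosh (r₀ ℓ) ^ 2 = 1 / 2 * (√(1 - 2 * κ ℓ) / κ ℓ + 1) := by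
  have hκ0 := κ_pos hℓ
  have hκs : κ ℓ ≤ √(1 - 2 * κ ℓ) :=
    le_sqrt_of_sq_le (by nlinarith [sq_sqrt (zero_le_two (α := ℝ))])
  have hA : 1 ≤ 1 / 2 * (√(1 - 2 * κ ℓ) / κ ℓ + 1) := by
    have := (one_le_div hκ0).mpr hκs
    linarith
  rw [r₀, arcosh_eq_real_arcosh, Real.cosh_arcosh (one_le_sqrt.mpr hA),
    sq_sqrt (zero_le_one.trans hA)]

lemma tendsto_mul_cosh_r₀_sq :
    Tendsto (fun ℓ => ℓ * cosh (r₀ ℓ) ^ 2) (𝓝[>] 0) (𝓝 (√3 / (4 * π))) := by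
  have h := ((tendsto_div_κ.mul ((tendsto_κ.const_mul 2).const_sub 1).sqrt).add
    (tendsto_nhdsWithin_of_tendsto_nhds tendsto_id)).div_const 2
  rw [show (2 / (4 * π / √3) * √(1 - 2 * 0) + 0) / 2 = √3 / (4 * π) by
    simp only [mul_zero, sub_zero, sqrt_one, mul_one, add_zero]; field_simp] at h
  refine h.congr' ?_
  filter_upwards [self_mem_nhdsWithin,
    tendsto_κ.eventually_le_const (sub_pos.mpr one_lt_sqrt_two)] with ℓ (hℓ : 0 < ℓ) hκ
  rw [cosh_r₀_sq hℓ hκ, id_eq]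
  ring

theorem sqrt_ell_cosh_tendsto :
    Filter.Tendsto (fun ℓ : ℝ => Real.sqrt ℓ * (Real.cosh (r₀ ℓ) - 1))
      (nhdsWithin 0 (Set.Ioi 0))
      (nhds (Real.sqrt (Real.sqrt 3 / (4 * Real.pi)))) := by
  have hlim := tendsto_mul_cosh_r₀_sq.sqrt.sub
    (tendsto_nhdsWithin_of_tendsto_nhds (tendsto_id (x := 𝓝 (0 : ℝ)))).sqrt
  rw [sqrt_zero, sub_zero] at hlim
  refine hlim.congr' (eventually_nhdsWithin_of_forall fun ℓ (hℓ : 0 < ℓ) => ?_)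
  rw [sqrt_mul hℓ.le, sqrt_sq (cosh_pos _).le, id_eq]
  ring
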